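/- arXiv:2405.15556 — 3 statements merged into one kernel-verified Lean document; each statement's English description precedes it below -/
import Mathlib

section
/- Let T be a finite type with at least two elements, let v : T → ℝ, let t_a ∈ T, let m′ ≥ 0 and η be real numbers, and let B be the maximum of v over T \ {t_a}. Suppose v(t_a) ≥ v(t) for all t ∈ T and 0 < v(t_a) − B ≤ η − m′. Then for every u : T → ℝ with 0 ≤ u(t) ≤ m′ for all t ∈ T, and for every t₁ ∈ T that maximizes v + u, there exists t₂ ≠ t₁ with (v(t₁) + u(t₁)) − (v(t₂) + u(t₂)) ≤ η. -/
/-- Full-vocabulary form of Case 3 soundness: if `t_a` is the benign top-1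
token and `0 < v t_a - B ≤ η - m'` where `B` is the benign runner-up value,
then for any attacker contribution `u` with `0 ≤ u t ≤ m'` and any maximizer
`t₁` of `v + u`, there is another token `t₂ ≠ t₁` within gap `η` of `t₁`. -/
theorem robustrag_vocab_case3 (T : Type*) [Fintype T] [DecidableEq T] (hcard : 2 ≤ Fintype.card T)
    (v : T → ℝ) (t_a : T) (m' η : ℝ) (hm : 0 ≤ m')
    (hne : (Finset.univ.erase t_a).Nonempty)
    (B : ℝ) (hB : B = (Finset.univ.erase t_a).sup' hne v)
    (htop : ∀ t, v t_a ≥ v t)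
    (hgap1 : 0 < v t_a - B) (hgap2 : v t_a - B ≤ η - m') :
    ∀ u : T → ℝ, (∀ t, 0 ≤ u t ∧ u t ≤ m') →
      ∀ t₁ : T, (∀ t, v t₁ + u t₁ ≥ v t + u t) →
        ∃ t₂ : T, t₂ ≠ t₁ ∧ (v t₁ + u t₁) - (v t₂ + u t₂) ≤ η := by
  intro u hu t₁ hmax
  by_cases h : t₁ = t_a
  · -- take t₂ achieving the sup' B
    obtain ⟨t₂, ht₂mem, ht₂⟩ := (Finset.univ.erase t_a).exists_mem_eq_sup' hne v
    refine ⟨t₂, ?_, ?_⟩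
    · intro hcontra
      exact (Finset.mem_erase.mp ht₂mem).1 (hcontra.trans h)
    · have hvt₂ : v t₂ = B := by rw [hB, ht₂]
      have h1 := (hu t₁).2
      have h2 := (hu t₂).1
      have h3 : v t₁ = v t_a := by rw [h]
      have h4 : u t₁ = u t_a := by rw [h]
      linarith
  · refine ⟨t_a, fun hc => h hc.symm, ?_⟩
    have hvt₁ : v t₁ ≤ B := by
      rw [hB]
      exact Finset.le_sup' v (Finset.mem_erase.mpr ⟨h, Finset.mem_univ t₁⟩)
    have h1 := (hu t₁).2
    have h2 := (hu t_a).1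
    linarith
end

section
/- Let W be a type of keywords, let c : W → ℕ, let k ∈ ℕ, and let μ be a real number. Define W_A = {w ∈ W : (c(w) : ℝ) ≥ μ} and W_C = {w ∈ W : μ − k ≤ (c(w) : ℝ) < μ}. Then the collection of sets {w ∈ W : (c(w) : ℝ) + a(w) ≥ μ}, as a : W → ℕ ranges over all functions with a(w) ≤ k for every w ∈ W, is exactly the collection {W_A ∪ T : T ⊆ W_C}. In particular, every such retained set contains W_A and is contained in W_A ∪ W_C, and every set of the form W_A ∪ T with T ⊆ W_C is realized by some such a. -/
/-- Combinatorial core of the keyword-aggregation certification: the family of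
possible retained keyword sets, over all adversarial additions `a` with
`a w ≤ k`, is exactly the family `{W_A ∪ T : T ⊆ W_C}` where `W_A` is the set
of keywords with count at least `μ` and `W_C` the set of keywords with count
in `[μ - k, μ)`. -/
theorem robustrag_keyword_sets (W : Type*) (c : W → ℕ) (k : ℕ) (μ : ℝ) :
    {S : Set W | ∃ a : W → ℕ, (∀ w, a w ≤ k) ∧
        S = {w : W | (c w : ℝ) + (a w : ℝ) ≥ μ}} =
    {S : Set W | ∃ T ⊆ {w : W | μ - (k : ℝ) ≤ (c w : ℝ) ∧ (c w : ℝ) < μ},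
        S = {w : W | (c w : ℝ) ≥ μ} ∪ T} := by
  classical
  ext S
  simp only [Set.mem_setOf_eq]
  constructor
  · rintro ⟨a, hak, rfl⟩
    refine ⟨{w | (c w : ℝ) + a w ≥ μ ∧ (c w : ℝ) < μ}, ?_, ?_⟩
    · intro w hw
      simp only [Set.mem_setOf_eq] at hw ⊢
      have : (a w : ℝ) ≤ k := by exact_mod_cast hak w
      exact ⟨by linarith [hw.1], hw.2⟩
    · ext w
      simp only [Set.mem_setOf_eq, Set.mem_union]
      constructor
      · intro h
        by_cases hc : (c w : ℝ) ≥ μ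
        · exact Or.inl hc
        · exact Or.inr ⟨h, lt_of_not_ge hc⟩
      · rintro (h | h)
        · have : (0 : ℝ) ≤ a w := Nat.cast_nonneg _
          linarith
        · exact h.1
  · rintro ⟨T, hT, rfl⟩
    refine ⟨fun w => if w ∈ T then k else 0, fun w => by dsimp only; split <;> omega, ?_⟩
    ext w
    simp only [Set.mem_setOf_eq, Set.mem_union]
    constructor
    · rintro (h | h)
      · have : (0 : ℝ) ≤ (if w ∈ T then (k : ℕ) else 0 : ℕ) := Nat.cast_nonneg _
        linarith
      · have := hT h
        simp only [Set.mem_setOf_eq] at this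
        simp only [if_pos h]
        linarith [this.1]
    · intro h
      by_cases hw : w ∈ T
      · exact Or.inr hw
      · simp only [if_neg hw, Nat.cast_zero] at h
        exact Or.inl (by linarith)
end

section
/- Let L and L′ be lists over an arbitrary type, and let k′ ∈ ℕ. If L is a sublist of L′ (i.e., L′ is obtained from L by inserting elements at arbitrary positions) and the length of L′ is at most the length of L plus k′, then for every n ∈ ℕ, the list consisting of the first n elements of L is a sublist of the list consisting of the first n + k′ elements of L′. -/
/-! Each inserted element delays the original elements by at most one position, so after
inserting at most `k'` elements the `n`-th original element still lies among the first `n + k'`. -/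

theorem List.Sublist.take_sublist_take_add_length_sub {α : Type*} {l₁ l₂ : List α}
    (h : l₁.Sublist l₂) (n : ℕ) :
    (l₁.take n).Sublist (l₂.take (n + (l₂.length - l₁.length))) := by
  induction h generalizing n with
  | slnil => simp
  | @cons l₁ l₂ a h ih =>
    have hshift : n + ((a :: l₂).length - l₁.length) = n + (l₂.length - l₁.length) + 1 := by
      simp only [List.length_cons]; have := h.length_le; omega
    rw [hshift, List.take_succ_cons]
    exact (ih n).cons a
  | @cons_cons l₁ l₂ a _ ih =>
    cases n with
    | zero => simp
    | succ m =>
      have hshift : m + 1 + ((a :: l₂).length - (a :: l₁).length)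
          = m + (l₂.length - l₁.length) + 1 := by
        simp only [List.length_cons]; omega
      rw [hshift, List.take_succ_cons, List.take_succ_cons]
      exact (ih m).cons_cons a

/-- Passage-injection attack model: if `L'` is obtained from `L` by inserting
at most `k'` elements (at arbitrary positions), then the first `n` elements of
`L` form a sublist of the first `n + k'` elements of `L'`. -/
theorem robustrag_injection_take {α : Type*} (L L' : List α) (k' : ℕ)
    (hsub : L.Sublist L') (hlen : L'.length ≤ L.length + k') :
    ∀ n : ℕ, (L.take n).Sublist (L'.take (n + k')) := fun n =>
  (hsub.take_sublist_take_add_length_sub n).trans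
    (List.take_sublist_take_left (by omega))
end
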